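/- Let (G₁,y₁),…,(G_s,y_s) ∈ 𝒢_n × {0,1} be a graph sample that is linearly separable in the 1-WLOA feature space with margin γ. If min over all pairs i,j with y_i ≠ y_j of (‖φ^{(T)}_{WLOA,𝓕}(G_i) − φ^{(T)}_{WLOA,𝓕}(G_j)‖² − ‖φ^{(T)}_WLOA(G_i) − φ^{(T)}_WLOA(G_j)‖²) is strictly larger than max over all pairs with y_i = y_j of the same quantity — i.e., the minimum increase of squared distances between classes strictly exceeds the maximum increase of squared distances within classes — then the margin strictly increases when 𝓕 is used: the sample is linearly separable in the 1-WLOA_𝓕 feature space with margin strictly larger than γ. -/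

import Mathlib

open scoped Classical

noncomputable section

/-- The type of 1-WL colors after `t` rounds, with initial colors in `A`.  A color at round
`t+1` is the pair of the color at round `t` together with the multiset of the neighbors'
colors at round `t`; this encodes the colorings of the Weisfeiler--Leman algorithm up to the
injective renaming `RELABEL`. -/
def WLColor (A : Type) : ℕ → Type :=
  fun t => Nat.rec A (fun _ C => C × Multiset C) t

/-- The 1-WL coloring after `t` rounds of a finite graph `G` with initial labeling `lab`:
`C_0 := lab` and `C_{t+1}(v) := (C_t(v), {{C_t(u) : u ∈ N(v)}})`. -/
def wlColoring {V A : Type} [Fintype V] (G : SimpleGraph V) (lab : V → A) :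
    (t : ℕ) → V → WLColor A t :=
  fun t => Nat.rec (motive := fun t => V → WLColor A t) lab
    (fun _ ih v => (ih v, ((Finset.univ.filter fun u => G.Adj v u).val.map ih))) t

/-- The number of vertices of `G` having 1-WL color `c` at round `t`
(an entry of the WL feature vector `φ_t(G)`). -/
def wlCount {V A : Type} [Fintype V] (G : SimpleGraph V) (lab : V → A) (t : ℕ)
    (c : WLColor A t) : ℕ :=
  (Finset.univ.filter fun v => wlColoring G lab t v = c).card

/-- The set `Σ_t` of colors appearing in `G` at round `t`. -/
def wlColors {V A : Type} [Fintype V] (G : SimpleGraph V) (lab : V → A) (t : ℕ) :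
    Finset (WLColor A t) :=
  Finset.univ.image (wlColoring G lab t)

/-- The constant labeling of an unlabeled graph. -/
def unlab {V : Type} : V → ℕ := fun _ => 0

/-- A bundled finite graph. -/
structure FinGraph where
  n : ℕ
  adj : SimpleGraph (Fin n)

/-- `v` is contained in a vertex subset `X` of `G` such that the induced subgraph `G[X]`
is isomorphic to `F`. -/
def inSubCopy {V : Type} (G : SimpleGraph V) (F : FinGraph) (v : V) : Prop :=
  ∃ X : Finset V, v ∈ X ∧ Nonempty (G.induce (X : Set V) ≃g F.adj)

/-- The initial labeling `ℓ_𝓕` of the `1`-WL_𝓕 algorithm: two vertices get the same label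
iff they agree, for every `F ∈ 𝓕`, on containment in a vertex subset inducing a subgraph
isomorphic to `F`. -/
def ellF {V : Type} (G : SimpleGraph V) (FF : Finset FinGraph) : V → Set FinGraph :=
  fun v => {F | F ∈ FF ∧ inSubCopy G F v}

/-- All 1-WL colors occurring at round `t` in some `n`-order graph. -/
def usedColors (n t : ℕ) : Finset (WLColor ℕ t) :=
  Finset.univ.image fun p : SimpleGraph (Fin n) × Fin n => wlColoring p.1 unlab t p.2

/-- The index set of the 1-WLOA feature vectors of `n`-order graphs after `T` rounds: a
coordinate for every round `t ≤ T`, every color that can occur at round `t` and every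
`j ∈ [n]`. -/
abbrev WloaIdx (n T : ℕ) :=
  (t : Fin (T + 1)) × {c : WLColor ℕ t.val // c ∈ usedColors n t.val} × Fin n

/-- The 1-WLOA feature vector `φ^{(T)}_WLOA(G)` of an `n`-order graph `G`: the `(t, c, j)`
entry is `1` iff at least `j` vertices of `G` have color `c` at round `t` (a unary encoding
of the color counts). -/
def featWLOA (n T : ℕ) (G : SimpleGraph (Fin n)) : EuclideanSpace ℝ (WloaIdx n T) :=
  WithLp.toLp 2 fun p => if p.2.2.val + 1 ≤ wlCount G unlab p.1.val p.2.1.val then 1 else 0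

/-- The normalized 1-WLOA feature vector `φ̄^{(T)}_WLOA(G)`. -/
def featWLOAn (n T : ℕ) (G : SimpleGraph (Fin n)) : EuclideanSpace ℝ (WloaIdx n T) :=
  ‖featWLOA n T G‖⁻¹ • featWLOA n T G

/-- All 1-WL_𝓕 colors occurring at round `t` in some `n`-order graph. -/
def usedColorsF (n : ℕ) (FF : Finset FinGraph) (t : ℕ) :
    Finset (WLColor (Set FinGraph) t) :=
  Finset.univ.image fun p : SimpleGraph (Fin n) × Fin n =>
    wlColoring p.1 (ellF p.1 FF) t p.2

/-- The index set of the 1-WL_𝓕 feature vectors of `n`-order graphs after `T` rounds. -/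
abbrev ColIdxF (n : ℕ) (FF : Finset FinGraph) (T : ℕ) :=
  (t : Fin (T + 1)) × {c : WLColor (Set FinGraph) t.val // c ∈ usedColorsF n FF t.val}

/-- The 1-WL_𝓕 feature vector `φ^{(T)}_{WL,𝓕}(G)` of an `n`-order graph `G`. -/
def featWLF (n : ℕ) (FF : Finset FinGraph) (T : ℕ) (G : SimpleGraph (Fin n)) :
    EuclideanSpace ℝ (ColIdxF n FF T) :=
  WithLp.toLp 2 fun p => (wlCount G (ellF G FF) p.1.val p.2.val : ℝ)

/-- The normalized 1-WL_𝓕 feature vector `φ̄^{(T)}_{WL,𝓕}(G)`. -/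
def featWLFn (n : ℕ) (FF : Finset FinGraph) (T : ℕ) (G : SimpleGraph (Fin n)) :
    EuclideanSpace ℝ (ColIdxF n FF T) :=
  ‖featWLF n FF T G‖⁻¹ • featWLF n FF T G

/-- The index set of the 1-WLOA_𝓕 feature vectors of `n`-order graphs after `T` rounds. -/
abbrev WloaIdxF (n : ℕ) (FF : Finset FinGraph) (T : ℕ) :=
  (t : Fin (T + 1)) ×
    {c : WLColor (Set FinGraph) t.val // c ∈ usedColorsF n FF t.val} × Fin n

/-- The 1-WLOA_𝓕 feature vector `φ^{(T)}_{WLOA,𝓕}(G)` of an `n`-order graph `G`. -/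
def featWLOAF (n : ℕ) (FF : Finset FinGraph) (T : ℕ) (G : SimpleGraph (Fin n)) :
    EuclideanSpace ℝ (WloaIdxF n FF T) :=
  WithLp.toLp 2 fun p => if p.2.2.val + 1 ≤ wlCount G (ellF G FF) p.1.val p.2.1.val then 1 else 0
/-! Writing the two hull points as `∑ aᵢ zᵢ` and `∑ bᵢ zᵢ`, the weights `w = a - b` sum to zero,
so `‖∑ wᵢ zᵢ‖² = -½ ∑ᵢⱼ wᵢ wⱼ ‖zᵢ - zⱼ‖²`. Passing from `x` to `z` therefore changes the squared
distance by `-½ ∑ᵢⱼ wᵢ wⱼ Δᵢⱼ`, where `Δ` is the increase of squared distances. Here `wᵢ wⱼ` is a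
combination of probability weights, nonnegative on pairs within a class and nonpositive on
pairs across the classes, so this change is at least `min_between Δ - max_within Δ > 0`. -/

open Finset

def sqDistIncrease {ι X Y : Type*} [PseudoMetricSpace X] [PseudoMetricSpace Y] (x : ι → X)
    (z : ι → Y) (i j : ι) : ℝ :=
  dist (z i) (z j) ^ 2 - dist (x i) (x j) ^ 2

def SeparatedWithMargin {X : Type*} [PseudoMetricSpace X] (A B : Set X) (γ : ℝ) : Prop :=
  ∀ p ∈ A, ∀ q ∈ B, 2 * γ ≤ dist p q

section MarginIncrease

variable {ι E F : Type*} [Fintype ι]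
  [NormedAddCommGroup E] [InnerProductSpace ℝ E] [NormedAddCommGroup F] [InnerProductSpace ℝ F]

theorem exists_weights_of_mem_convexHull_image {V : Type*} [AddCommGroup V] [Module ℝ V]
    {f : ι → V} {S : Set ι} {p : V} (hp : p ∈ convexHull ℝ (f '' S)) :
    ∃ w : ι → ℝ, (∀ i, 0 ≤ w i) ∧ (∀ i, w i ≠ 0 → i ∈ S) ∧ ∑ i, w i = 1 ∧
      ∑ i, w i • f i = p := by
  obtain ⟨κ, _, v, q, hv0, hv1, hqS, rfl⟩ := mem_convexHull_iff_exists_fintype.mp hp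
  choose σ hσS hσq using hqS
  refine ⟨fun j => ∑ k with σ k = j, v k, fun j => sum_nonneg fun k _ => hv0 k,
    fun j hj => ?_, (sum_fiberwise _ _ _).trans hv1, ?_⟩
  · obtain ⟨k, hk, -⟩ := exists_ne_zero_of_sum_ne_zero hj
    exact (mem_filter.1 hk).2 ▸ hσS k
  · calc ∑ j, (∑ k with σ k = j, v k) • f j = ∑ j, ∑ k with σ k = j, v k • q k := by
          refine sum_congr rfl fun j _ => ?_
          rw [sum_smul]
          exact sum_congr rfl fun k hk => by rw [← (mem_filter.1 hk).2, hσq]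
      _ = ∑ k, v k • q k := sum_fiberwise _ _ _

theorem sum_smul_mem_convexHull_image {V : Type*} [AddCommGroup V] [Module ℝ V]
    (f : ι → V) {S : Set ι} {w : ι → ℝ} (h0 : ∀ i, 0 ≤ w i) (hS : ∀ i, w i ≠ 0 → i ∈ S)
    (h1 : ∑ i, w i = 1) : ∑ i, w i • f i ∈ convexHull ℝ (f '' S) := by
  have hw : ∑ i with i ∈ S, w i = 1 := by rw [sum_filter_of_ne fun i _ => hS i, h1]
  rw [← sum_filter_of_ne fun i _ hi => hS i (left_ne_zero_of_smul hi),
    ← centerMass_eq_of_sum_1 _ _ hw]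
  exact centerMass_mem_convexHull _ (fun i _ => h0 i) (hw ▸ one_pos)
    fun i hi => Set.mem_image_of_mem f (mem_filter.1 hi).2

theorem dist_sum_smul_sq_of_sum_eq {a b : ι → ℝ} (hab : ∑ i, a i = ∑ i, b i) (v : ι → F) :
    dist (∑ i, a i • v i) (∑ i, b i • v i) ^ 2 =
      -(∑ i, ∑ j, (a i - b i) * (a j - b j) * dist (v i) (v j) ^ 2) / 2 := by
  have hw : ∑ i, (a i - b i) = 0 := by rw [sum_sub_distrib, hab, sub_self]
  rw [dist_eq_norm, ← sum_sub_distrib]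
  simp_rw [← sub_smul]
  rw [← real_inner_self_eq_norm_sq, inner_sum_smul_sum_smul_of_sum_eq_zero v hw v hw]
  simp only [dist_eq_norm, sq]

theorem sum_sum_mul_mul_le {a b : ι → ℝ} (ha0 : ∀ i, 0 ≤ a i) (hb0 : ∀ i, 0 ≤ b i)
    (ha1 : ∑ i, a i = 1) (hb1 : ∑ i, b i = 1) {f : ι → ι → ℝ} {M : ℝ}
    (hf : ∀ i j, a i ≠ 0 → b j ≠ 0 → f i j ≤ M) :
    ∑ i, ∑ j, a i * b j * f i j ≤ M :=
  calc ∑ i, ∑ j, a i * b j * f i j ≤ ∑ i, ∑ j, a i * b j * M := by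
        refine sum_le_sum fun i _ => sum_le_sum fun j _ => ?_
        obtain h | h := eq_or_ne (a i * b j) 0
        · simp [h]
        · exact mul_le_mul_of_nonneg_left (hf i j (left_ne_zero_of_mul h)
            (right_ne_zero_of_mul h)) (mul_nonneg (ha0 i) (hb0 j))
    _ = M := by simp [← sum_mul, ← mul_sum, ha1, hb1]

theorem le_sum_sum_mul_mul {a b : ι → ℝ} (ha0 : ∀ i, 0 ≤ a i) (hb0 : ∀ i, 0 ≤ b i)
    (ha1 : ∑ i, a i = 1) (hb1 : ∑ i, b i = 1) {f : ι → ι → ℝ} {m : ℝ}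
    (hf : ∀ i j, a i ≠ 0 → b j ≠ 0 → m ≤ f i j) :
    m ≤ ∑ i, ∑ j, a i * b j * f i j := by
  have := sum_sum_mul_mul_le ha0 hb0 ha1 hb1 (f := fun i j => -f i j) (M := -m)
    fun i j hi hj => neg_le_neg (hf i j hi hj)
  simpa [mul_neg, sum_neg_distrib] using this

theorem dist_sum_smul_sq_add_le (x : ι → E) (z : ι → F) {a b : ι → ℝ}
    (ha0 : ∀ i, 0 ≤ a i) (hb0 : ∀ i, 0 ≤ b i) (ha1 : ∑ i, a i = 1) (hb1 : ∑ i, b i = 1)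
    {m M : ℝ} (haa : ∀ i j, a i ≠ 0 → a j ≠ 0 → sqDistIncrease x z i j ≤ M)
    (hbb : ∀ i j, b i ≠ 0 → b j ≠ 0 → sqDistIncrease x z i j ≤ M)
    (hab : ∀ i j, a i ≠ 0 → b j ≠ 0 → m ≤ sqDistIncrease x z i j) :
    dist (∑ i, a i • x i) (∑ i, b i • x i) ^ 2 + (m - M) ≤
      dist (∑ i, a i • z i) (∑ i, b i • z i) ^ 2 := by
  have hba : ∀ i j, b i ≠ 0 → a j ≠ 0 → m ≤ sqDistIncrease x z i j := fun i j hi hj => by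
    simpa only [sqDistIncrease, dist_comm] using hab j i hj hi
  have hexpand :
      (∑ i, ∑ j, (a i - b i) * (a j - b j) * dist (z i) (z j) ^ 2) -
          ∑ i, ∑ j, (a i - b i) * (a j - b j) * dist (x i) (x j) ^ 2 =
        ∑ i, ∑ j, a i * a j * sqDistIncrease x z i j +
          ∑ i, ∑ j, b i * b j * sqDistIncrease x z i j -
          ∑ i, ∑ j, a i * b j * sqDistIncrease x z i j -
          ∑ i, ∑ j, b i * a j * sqDistIncrease x z i j := by
    simp only [← sum_sub_distrib, ← sum_add_distrib, sqDistIncrease]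
    exact sum_congr rfl fun i _ => sum_congr rfl fun j _ => by ring
  rw [dist_sum_smul_sq_of_sum_eq (ha1.trans hb1.symm),
    dist_sum_smul_sq_of_sum_eq (ha1.trans hb1.symm)]
  linarith [sum_sum_mul_mul_le ha0 ha0 ha1 ha1 haa, sum_sum_mul_mul_le hb0 hb0 hb1 hb1 hbb,
    le_sum_sum_mul_mul ha0 hb0 ha1 hb1 hab, le_sum_sum_mul_mul hb0 ha0 hb1 ha1 hba]

theorem exists_dist_sq_add_le_of_mem_convexHull (x : ι → E) (z : ι → F) {S T : Set ι}
    {m M : ℝ} (hS : ∀ i ∈ S, ∀ j ∈ S, sqDistIncrease x z i j ≤ M)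
    (hT : ∀ i ∈ T, ∀ j ∈ T, sqDistIncrease x z i j ≤ M)
    (hST : ∀ i ∈ S, ∀ j ∈ T, m ≤ sqDistIncrease x z i j) {p q : F}
    (hp : p ∈ convexHull ℝ (z '' S)) (hq : q ∈ convexHull ℝ (z '' T)) :
    ∃ p' ∈ convexHull ℝ (x '' S), ∃ q' ∈ convexHull ℝ (x '' T),
      dist p' q' ^ 2 + (m - M) ≤ dist p q ^ 2 := by
  obtain ⟨a, ha0, haS, ha1, rfl⟩ := exists_weights_of_mem_convexHull_image hp
  obtain ⟨b, hb0, hbT, hb1, rfl⟩ := exists_weights_of_mem_convexHull_image hq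
  exact ⟨_, sum_smul_mem_convexHull_image x ha0 haS ha1,
    _, sum_smul_mem_convexHull_image x hb0 hbT hb1,
    dist_sum_smul_sq_add_le x z ha0 hb0 ha1 hb1
      (fun i j hi hj => hS i (haS i hi) j (haS j hj))
      (fun i j hi hj => hT i (hbT i hi) j (hbT j hj))
      (fun i j hi hj => hST i (haS i hi) j (hbT j hj))⟩

end MarginIncrease

theorem SeparatedWithMargin.exists_gt_of_dist_sq_add_le {X Y : Type*} [PseudoMetricSpace X]
    [PseudoMetricSpace Y] {A' B' : Set X} {A B : Set Y} {γ δ : ℝ}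
    (hsep : SeparatedWithMargin A' B' γ) (hδ : 0 < δ)
    (hgain : ∀ p ∈ A, ∀ q ∈ B, ∃ p' ∈ A', ∃ q' ∈ B', dist p' q' ^ 2 + δ ≤ dist p q ^ 2) :
    ∃ γ', γ < γ' ∧ SeparatedWithMargin A B γ' := by
  set γ₀ := max γ 0
  refine ⟨√(γ₀ ^ 2 + δ / 4),
    (le_max_left γ 0).trans_lt (Real.lt_sqrt_of_sq_lt (by linarith)), fun p hp q hq => ?_⟩
  obtain ⟨p', hp', q', hq', hpq⟩ := hgain p hp q hq
  have hγ₀ : 2 * γ₀ ≤ dist p' q' := by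
    rw [mul_max_of_nonneg _ _ zero_le_two, mul_zero]
    exact max_le (hsep p' hp' q' hq') dist_nonneg
  have : √(γ₀ ^ 2 + δ / 4) ≤ dist p q / 2 :=
    Real.sqrt_le_iff.2 ⟨by positivity,
      by nlinarith [mul_self_le_mul_self (by positivity : (0 : ℝ) ≤ 2 * γ₀) hγ₀]⟩
  linarith

theorem exists_lt_of_forall_lt_of_finite {α β : Type*} [Finite α] [Finite β] {f : α → ℝ}
    {g : β → ℝ} (h : ∀ a b, f a < g b) :
    ∃ M m, M < m ∧ (∀ a, f a ≤ M) ∧ ∀ b, m ≤ g b := by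
  obtain ⟨c, hfc, hcg⟩ := (Set.finite_range f).exists_between' (Set.finite_range g)
    (by rintro _ ⟨a, rfl⟩ _ ⟨b, rfl⟩; exact h a b)
  obtain ⟨M, hfM, hMc⟩ := (Set.finite_range f).exists_between' (Set.finite_singleton c)
    (by rintro _ ⟨a, rfl⟩ _ rfl; exact hfc _ ⟨a, rfl⟩)
  exact ⟨M, c, hMc c rfl, fun a => (hfM _ ⟨a, rfl⟩).le, fun b => (hcg _ ⟨b, rfl⟩).le⟩

theorem wloaF_margin_increase_general (n T s : ℕ) (FF : Finset FinGraph)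
    (Gs : Fin s → SimpleGraph (Fin n)) (y : Fin s → Bool) (γ : ℝ)
    (hsep : ∀ p ∈ convexHull ℝ ((fun i => featWLOA n T (Gs i)) '' {i | y i = true}),
      ∀ q ∈ convexHull ℝ ((fun i => featWLOA n T (Gs i)) '' {i | y i = false}),
      2 * γ ≤ dist p q)
    (hcond : ∀ i j k l : Fin s, y i ≠ y j → y k = y l →
      dist (featWLOAF n FF T (Gs k)) (featWLOAF n FF T (Gs l)) ^ 2 -
          dist (featWLOA n T (Gs k)) (featWLOA n T (Gs l)) ^ 2 <
        dist (featWLOAF n FF T (Gs i)) (featWLOAF n FF T (Gs j)) ^ 2 -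
          dist (featWLOA n T (Gs i)) (featWLOA n T (Gs j)) ^ 2) :
    ∃ γ' : ℝ, γ < γ' ∧
      ∀ p ∈ convexHull ℝ ((fun i => featWLOAF n FF T (Gs i)) '' {i | y i = true}),
        ∀ q ∈ convexHull ℝ ((fun i => featWLOAF n FF T (Gs i)) '' {i | y i = false}),
        2 * γ' ≤ dist p q := by
  set x := fun i => featWLOA n T (Gs i)
  set z := fun i => featWLOAF n FF T (Gs i)
  obtain ⟨M, m, hMm, hM, hm⟩ := exists_lt_of_forall_lt_of_finite
    (f := fun kl : {kl : Fin s × Fin s // y kl.1 = y kl.2} => sqDistIncrease x z kl.1.1 kl.1.2)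
    (g := fun ij : {ij : Fin s × Fin s // y ij.1 ≠ y ij.2} => sqDistIncrease x z ij.1.1 ij.1.2)
    fun kl ij => hcond _ _ _ _ ij.2 kl.2
  refine SeparatedWithMargin.exists_gt_of_dist_sq_add_le hsep (sub_pos.2 hMm)
    fun p hp q hq => exists_dist_sq_add_le_of_mem_convexHull x z ?_ ?_ ?_ hp hq
  · exact fun i hi j hj => hM ⟨(i, j), hi.trans hj.symm⟩
  · exact fun i hi j hj => hM ⟨(i, j), hi.trans hj.symm⟩
  · exact fun i hi j hj => hm ⟨(i, j), by simp_all⟩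

/-- Let `(G₁, y₁), …, (G_s, y_s)` be a graph sample that is linearly
separable in the 1-WLOA feature space with margin `γ` (the distance between the convex hulls
of the two classes is at least `2γ`).  If the minimum increase of squared distances between
the classes, when passing from the 1-WLOA to the 1-WLOA_𝓕 feature vectors, strictly exceeds
the maximum increase of squared distances within the classes, then the sample is linearly
separable in the 1-WLOA_𝓕 feature space with margin strictly larger than `γ`. -/
theorem wloaF_margin_increase (n T s : ℕ) (FF : Finset FinGraph)
    (Gs : Fin s → SimpleGraph (Fin n)) (y : Fin s → Bool) (γ : ℝ) (hγ : 0 < γ)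
    (hsep : ∀ p ∈ convexHull ℝ ((fun i => featWLOA n T (Gs i)) '' {i | y i = true}),
      ∀ q ∈ convexHull ℝ ((fun i => featWLOA n T (Gs i)) '' {i | y i = false}),
      2 * γ ≤ dist p q)
    (hcond : ∀ i j k l : Fin s, y i ≠ y j → y k = y l →
      dist (featWLOAF n FF T (Gs k)) (featWLOAF n FF T (Gs l)) ^ 2 -
          dist (featWLOA n T (Gs k)) (featWLOA n T (Gs l)) ^ 2 <
        dist (featWLOAF n FF T (Gs i)) (featWLOAF n FF T (Gs j)) ^ 2 -
          dist (featWLOA n T (Gs i)) (featWLOA n T (Gs j)) ^ 2) :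
    ∃ γ' : ℝ, γ < γ' ∧
      ∀ p ∈ convexHull ℝ ((fun i => featWLOAF n FF T (Gs i)) '' {i | y i = true}),
        ∀ q ∈ convexHull ℝ ((fun i => featWLOAF n FF T (Gs i)) '' {i | y i = false}),
        2 * γ' ≤ dist p q :=
  wloaF_margin_increase_general n T s FF Gs y γ hsep hcond

end
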